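/- Let G be uniform on {0,1}, and conditional on G = g, let M be the outcome of measuring a fixed state ψ on ℂ^d in basis g, where basis 0 and basis 1 are mutually unbiased. Then H(M,G) ≥ 1 + (1/2)·log d, with equality when ψ is a computational basis state. -/

import Mathlib

open scoped ComplexOrder

/-- Shannon entropy (in bits) of a distribution on a finite set. -/
noncomputable def dent {X : Type*} [Fintype X] (q : X → ℝ) : ℝ :=
  -∑ x, q x * Real.logb 2 (q x)

/-- Basis vector `m` of basis `g`: basis `false` is the computational basis,
basis `true` is `f`. -/
noncomputable def bvec {d : ℕ} (f : Fin d → Fin d → ℂ) (g : Bool) (m : Fin d) :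
    Fin d → ℂ :=
  if g then f m else Pi.single m 1

/-- Output distribution of the two-basis measurement channel: `G` is a uniform bit and,
given `G = g`, `M` is the Born-rule outcome of measuring `ψ` in basis `g`. -/
noncomputable def outDist {d : ℕ} (f : Fin d → Fin d → ℂ)
    (ψ : Matrix (Fin d) (Fin d) ℂ) : Bool × Fin d → ℝ :=
  fun gm => (1 / 2) *
    (dotProduct (star (bvec f gm.1 gm.2)) (ψ.mulVec (bvec f gm.1 gm.2))).re

/-!
The chain rule reduces the theorem to the Maassen–Uffink relation `H(p) + H(q) ≥ log d` for the
Born distributions `p`, `q` of `ψ` in the two bases. We prove it by interpolation. The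
Kirkwood–Dirac quasiprobability `K(m, i) = ⟨f_m|ψ|e_i⟩⟨e_i|f_m⟩` has marginals `q` and `p`, and
`F(z) = ∑ K(m, i) (d q_m p_i)^{z/2}` is an entire function with `F(0) = 1`. On `Re z = 1` the
Cauchy–Schwarz inequality for `ψ` and `|⟨e_i|f_m⟩|² = 1/d` bound `|F|` by `∑ q_m p_i = 1`; on
`Re z = 0` the phases turn `F` into a pairing of `ψ` with a rotated orthonormal basis, again of
norm at most `1`. By Hadamard's three lines theorem `|F| ≤ 1` on `[0, 1]`, so `t ↦ Re F(t)` is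
maximal at `t = 0` and its derivative there, `(log d - H(p) - H(q)) / 2`, is nonpositive.
-/

open Matrix

section Born

variable {n : Type*} [Fintype n]

/-- The probability of the outcome `v` when `ψ` is measured in an orthonormal basis containing
`v`. -/
def bornProb (ψ : Matrix n n ℂ) (v : n → ℂ) : ℝ := (star v ⬝ᵥ ψ *ᵥ v).re

theorem bornProb_nonneg {ψ : Matrix n n ℂ} (hψ : ψ.PosSemidef) (v : n → ℂ) :
    0 ≤ bornProb ψ v :=
  hψ.re_dotProduct_nonneg v

theorem Matrix.PosSemidef.norm_dotProduct_mulVec_le {ψ : Matrix n n ℂ} (hψ : ψ.PosSemidef)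
    (u v : n → ℂ) : ‖star u ⬝ᵥ ψ *ᵥ v‖ ≤ √(bornProb ψ u) * √(bornProb ψ v) := by
  let _ := ψ.toSeminormedAddCommGroup hψ
  let _ := ψ.toInnerProductSpace hψ
  have key := inner_mul_inner_self_le (𝕜 := ℂ) u v
  have hinner : ∀ x y : n → ℂ, inner ℂ x y = star x ⬝ᵥ ψ *ᵥ y := fun _ _ => dotProduct_comm _ _
  rw [norm_inner_symm v u, hinner, hinner, hinner] at key
  rw [← Real.sqrt_mul (bornProb_nonneg hψ u)]
  exact Real.le_sqrt_of_sq_le (by rw [sq]; exact key)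

variable [DecidableEq n]

theorem bornProb_single (ψ : Matrix n n ℂ) (i : n) :
    bornProb ψ (Pi.single i 1) = (ψ i i).re := by
  simp [bornProb]

theorem sum_bornProb_single (ψ : Matrix n n ℂ) :
    ∑ i, bornProb ψ (Pi.single i 1) = ψ.trace.re := by
  simp [bornProb_single, Matrix.trace, Complex.re_sum]

theorem bornProb_single_single (w : n) (v : n → ℂ) :
    bornProb (Matrix.single w w 1) v = Complex.normSq (v w) := by
  rw [bornProb, single_mulVec, one_mul, ← Pi.single, dotProduct_single, Pi.star_apply,
    RCLike.star_def, mul_comm, Complex.mul_conj, Complex.ofReal_re]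

theorem sum_star_mul_eq_ite {f : n → n → ℂ}
    (hON : ∀ i j, star (f i) ⬝ᵥ f j = if i = j then 1 else 0) (k i : n) :
    ∑ m, star (f m k) * f m i = if k = i then 1 else 0 := by
  have hU : Matrix.of f ∈ unitaryGroup n ℂ := by
    rw [mem_unitaryGroup_iff]
    ext i j
    simpa [mul_apply, dotProduct, mul_comm, one_apply, eq_comm] using hON j i
  simpa [mul_apply, one_apply] using congrFun₂ (mem_unitaryGroup_iff'.mp hU) k i

theorem orthonormal_phase_mul {f : n → n → ℂ}
    (hON : ∀ i j, star (f i) ⬝ᵥ f j = if i = j then 1 else 0) {β : n → ℂ}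
    (hβ : ∀ k, ‖β k‖ = 1) (i j : n) :
    star (β * f i) ⬝ᵥ (β * f j) = if i = j then 1 else 0 := by
  rw [← hON i j]
  refine Finset.sum_congr rfl fun k _ => ?_
  have hk : star (β k) * β k = 1 := by
    rw [RCLike.star_def, ← Complex.normSq_eq_conj_mul_self, Complex.normSq_eq_norm_sq, hβ]
    simp
  simp only [Pi.star_apply, Pi.mul_apply, star_mul']
  linear_combination (star (f i k) * f j k) * hk

def kirkwoodDirac (ψ : Matrix n n ℂ) (f : n → n → ℂ) (m i : n) : ℂ :=
  (star (f m) ⬝ᵥ ψ *ᵥ Pi.single i 1) * f m i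

theorem kirkwoodDirac_eq_sum (ψ : Matrix n n ℂ) (f : n → n → ℂ) (m i : n) :
    kirkwoodDirac ψ f m i = ∑ k, star (f m k) * ψ k i * f m i := by
  simp [kirkwoodDirac, dotProduct, Finset.sum_mul]

theorem sum_mul_kirkwoodDirac (ψ : Matrix n n ℂ) (f : n → n → ℂ) (β : n → ℂ) (m : n) :
    ∑ i, β i * kirkwoodDirac ψ f m i = star (f m) ⬝ᵥ ψ *ᵥ (β * f m) := by
  simp only [kirkwoodDirac_eq_sum, dotProduct, mulVec, Finset.mul_sum]
  rw [Finset.sum_comm]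
  exact Finset.sum_congr rfl fun _ _ => Finset.sum_congr rfl fun _ _ => by simp; ring

theorem sum_kirkwoodDirac_right (ψ : Matrix n n ℂ) (f : n → n → ℂ) (m : n) :
    ∑ i, kirkwoodDirac ψ f m i = star (f m) ⬝ᵥ ψ *ᵥ f m := by
  simpa using sum_mul_kirkwoodDirac ψ f 1 m

theorem sum_kirkwoodDirac_left {f : n → n → ℂ}
    (hON : ∀ i j, star (f i) ⬝ᵥ f j = if i = j then 1 else 0) (ψ : Matrix n n ℂ) (i : n) :
    ∑ m, kirkwoodDirac ψ f m i = ψ i i := by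
  calc ∑ m, kirkwoodDirac ψ f m i = ∑ k, ψ k i * ∑ m, star (f m k) * f m i := by
        simp only [kirkwoodDirac_eq_sum, Finset.mul_sum]
        rw [Finset.sum_comm]
        exact Finset.sum_congr rfl fun _ _ => Finset.sum_congr rfl fun _ _ => by ring
    _ = ψ i i := by
        simp only [sum_star_mul_eq_ite hON, mul_ite, mul_one, mul_zero, Finset.sum_ite_eq',
          Finset.mem_univ, if_true]

theorem sum_re_kirkwoodDirac_right (ψ : Matrix n n ℂ) (f : n → n → ℂ) (m : n) :
    ∑ i, (kirkwoodDirac ψ f m i).re = bornProb ψ (f m) := by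
  rw [← Complex.re_sum, sum_kirkwoodDirac_right, bornProb]

theorem sum_re_kirkwoodDirac_left {f : n → n → ℂ}
    (hON : ∀ i j, star (f i) ⬝ᵥ f j = if i = j then 1 else 0) (ψ : Matrix n n ℂ) (i : n) :
    ∑ m, (kirkwoodDirac ψ f m i).re = bornProb ψ (Pi.single i 1) := by
  rw [← Complex.re_sum, sum_kirkwoodDirac_left hON, bornProb_single]

theorem sum_bornProb_eq_re_trace {f : n → n → ℂ}
    (hON : ∀ i j, star (f i) ⬝ᵥ f j = if i = j then 1 else 0) (ψ : Matrix n n ℂ) :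
    ∑ m, bornProb ψ (f m) = ψ.trace.re := by
  simp_rw [← sum_re_kirkwoodDirac_right ψ f, ← sum_bornProb_single ψ,
    ← sum_re_kirkwoodDirac_left hON ψ]
  exact Finset.sum_comm

theorem norm_kirkwoodDirac_le {ψ : Matrix n n ℂ} (hψ : ψ.PosSemidef) (f : n → n → ℂ)
    (m i : n) :
    ‖kirkwoodDirac ψ f m i‖ ≤
      √(bornProb ψ (f m)) * √(bornProb ψ (Pi.single i 1)) * ‖f m i‖ := by
  rw [kirkwoodDirac, norm_mul]
  gcongr
  exact hψ.norm_dotProduct_mulVec_le _ _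

end Born

section ExpSum

open Complex Set

variable {ι : Type*} [Fintype ι] (c : ι → ℂ) (μ : ι → ℝ)

theorem norm_expSum_le_one_of_mem_Icc
    (h0 : ∀ z : ℂ, z.re = 0 → ‖∑ j, c j * cexp (z * μ j)‖ ≤ 1)
    (h1 : ∀ z : ℂ, z.re = 1 → ‖∑ j, c j * cexp (z * μ j)‖ ≤ 1) {t : ℝ} (ht : t ∈ Icc 0 1) :
    ‖∑ j, c j * cexp (t * μ j)‖ ≤ 1 := by
  have hbdd : BddAbove ((norm ∘ fun z : ℂ => ∑ j, c j * cexp (z * μ j)) ''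
      HadamardThreeLines.verticalClosedStrip 0 1) := by
    refine ⟨∑ j, ‖c j‖ * Real.exp |μ j|, ?_⟩
    rintro _ ⟨z, hz, rfl⟩
    have hz' : |z.re| ≤ 1 := abs_le.mpr ⟨by linarith [hz.1], hz.2⟩
    refine (norm_sum_le _ _).trans (Finset.sum_le_sum fun j _ => ?_)
    rw [norm_mul, norm_exp, re_mul_ofReal]
    gcongr
    calc z.re * μ j ≤ |z.re| * |μ j| := by rw [← abs_mul]; exact le_abs_self _
      _ ≤ |μ j| := mul_le_of_le_one_left (abs_nonneg _) hz'
  have hdiff : Differentiable ℂ fun z : ℂ => ∑ j, c j * cexp (z * μ j) := by fun_prop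
  simpa using HadamardThreeLines.norm_le_interp_of_mem_verticalClosedStrip' zero_lt_one
    (by simpa [HadamardThreeLines.verticalClosedStrip] using ht) hdiff.diffContOnCl hbdd h0 h1

theorem sum_re_mul_nonpos_of_norm_expSum_le_one
    (h0 : ∀ z : ℂ, z.re = 0 → ‖∑ j, c j * cexp (z * μ j)‖ ≤ 1)
    (h1 : ∀ z : ℂ, z.re = 1 → ‖∑ j, c j * cexp (z * μ j)‖ ≤ 1) (hc : ∑ j, (c j).re = 1) :
    ∑ j, (c j).re * μ j ≤ 0 := by
  set h : ℝ → ℝ := fun t => ∑ j, (c j).re * Real.exp (t * μ j)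
  have hmax : IsMaxOn h (Icc 0 1) 0 := fun t ht => by
    have hre : h t = (∑ j, c j * cexp (t * μ j)).re := by
      simp [h, re_sum, ← ofReal_mul, ← ofReal_exp]
    simpa [h, hc, hre] using (re_le_norm _).trans (norm_expSum_le_one_of_mem_Icc c μ h0 h1 ht)
  have hderiv : HasDerivAt h (∑ j, (c j).re * μ j) 0 := by
    simpa using HasDerivAt.fun_sum (u := Finset.univ) fun j _ =>
      (((hasDerivAt_id (0 : ℝ)).mul_const (μ j)).exp).const_mul (c j).re
  simpa using hmax.localize.hasFDerivWithinAt_nonpos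
    hderiv.hasDerivWithinAt.hasFDerivWithinAt
    (mem_posTangentConeAt_of_segment_subset (by simp [segment_eq_Icc]) : (1 : ℝ) ∈ _)

end ExpSum

namespace Real

theorem exp_log_div_two {x : ℝ} (hx : 0 < x) : exp (log x / 2) = √x := by
  rw [sqrt_eq_rpow, rpow_def_of_pos hx, div_eq_mul_one_div]

theorem sqrt_mul_exp_log_div_two {x : ℝ} (hx : 0 ≤ x) : √x * exp (log x / 2) = x := by
  rcases hx.eq_or_lt with rfl | hx
  · simp
  · rw [exp_log_div_two hx, mul_self_sqrt hx.le]

theorem sqrt_mul_exp_neg_log_div_two_le_one (x : ℝ) : √x * exp (-log x / 2) ≤ 1 := by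
  rcases le_or_gt x 0 with hx | hx
  · simp [sqrt_eq_zero'.mpr hx]
  · rw [neg_div, exp_neg, exp_log_div_two hx, mul_inv_cancel₀ (sqrt_pos.mpr hx).ne']

end Real

section Uncertainty

open Real

variable {n : Type*} [Fintype n] [DecidableEq n] {ψ : Matrix n n ℂ} {f : n → n → ℂ}

noncomputable def interpolationExponent (ψ : Matrix n n ℂ) (f : n → n → ℂ) (c : ℝ) (m i : n) :
    ℝ :=
  (log (bornProb ψ (f m)) + log (bornProb ψ (Pi.single i 1)) - log c) / 2

theorem norm_sum_phase_mul_kirkwoodDirac_le_one (hψ : ψ.PosSemidef) (htr : ψ.trace = 1)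
    (hON : ∀ i j, star (f i) ⬝ᵥ f j = if i = j then 1 else 0) {α β : n → ℂ}
    (hα : ∀ m, ‖α m‖ ≤ 1) (hβ : ∀ i, ‖β i‖ = 1) :
    ‖∑ m, α m * ∑ i, β i * kirkwoodDirac ψ f m i‖ ≤ 1 := by
  simp_rw [sum_mul_kirkwoodDirac]
  calc ‖∑ m, α m * (star (f m) ⬝ᵥ ψ *ᵥ (β * f m))‖
      ≤ ∑ m, √(bornProb ψ (f m)) * √(bornProb ψ (β * f m)) := by
        refine (norm_sum_le _ _).trans (Finset.sum_le_sum fun m _ => ?_)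
        rw [norm_mul]
        exact (mul_le_of_le_one_left (norm_nonneg _) (hα m)).trans
          (hψ.norm_dotProduct_mulVec_le _ _)
    _ ≤ √(∑ m, bornProb ψ (f m)) * √(∑ m, bornProb ψ (β * f m)) :=
        sum_sqrt_mul_sqrt_le _ (fun _ => bornProb_nonneg hψ _) (fun _ => bornProb_nonneg hψ _)
    _ = 1 := by
        rw [sum_bornProb_eq_re_trace hON, sum_bornProb_eq_re_trace (orthonormal_phase_mul hON hβ),
          htr]
        simp

theorem norm_sum_kirkwoodDirac_mul_exp_le_one_of_re_eq_zero (hψ : ψ.PosSemidef)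
    (htr : ψ.trace = 1) (hON : ∀ i j, star (f i) ⬝ᵥ f j = if i = j then 1 else 0) (c : ℝ)
    {z : ℂ} (hz : z.re = 0) :
    ‖∑ x : n × n, kirkwoodDirac ψ f x.1 x.2 *
      Complex.exp (z * interpolationExponent ψ f c x.1 x.2)‖ ≤ 1 := by
  have hphase : ∀ r : ℝ, ‖Complex.exp (z * r)‖ = 1 := by simp [Complex.norm_exp, hz]
  convert norm_sum_phase_mul_kirkwoodDirac_le_one hψ htr hON
    (α := fun m => Complex.exp (z * ((log (bornProb ψ (f m)) - log c) / 2 : ℝ)))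
    (β := fun i => Complex.exp (z * (log (bornProb ψ (Pi.single i 1)) / 2 : ℝ)))
    (fun _ => (hphase _).le) (fun _ => hphase _) using 2
  rw [Fintype.sum_prod_type]
  refine Finset.sum_congr rfl fun m _ => ?_
  rw [Finset.mul_sum]
  refine Finset.sum_congr rfl fun i _ => ?_
  rw [mul_left_comm, ← mul_assoc, ← Complex.exp_add, mul_comm, interpolationExponent]
  congr 3
  push_cast
  ring

theorem norm_kirkwoodDirac_mul_exp_le (hψ : ψ.PosSemidef) {c : ℝ}
    (hc : ∀ m i, Complex.normSq (f m i) ≤ c) (m i : n) :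
    ‖kirkwoodDirac ψ f m i‖ * exp (interpolationExponent ψ f c m i) ≤
      bornProb ψ (f m) * bornProb ψ (Pi.single i 1) := by
  have hf : ‖f m i‖ ≤ √c := by rw [Complex.norm_def]; exact sqrt_le_sqrt (hc m i)
  have hexp : exp (interpolationExponent ψ f c m i) = exp (log (bornProb ψ (f m)) / 2) *
      exp (log (bornProb ψ (Pi.single i 1)) / 2) * exp (-log c / 2) := by
    rw [interpolationExponent, ← exp_add, ← exp_add]
    ring_nf
  set q := bornProb ψ (f m)
  set p := bornProb ψ (Pi.single i 1)
  calc _ ≤ √q * √p * √c * exp (interpolationExponent ψ f c m i) := by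
        gcongr
        exact (norm_kirkwoodDirac_le hψ f m i).trans (by gcongr)
    _ = (√q * exp (log q / 2)) * (√p * exp (log p / 2)) * (√c * exp (-log c / 2)) := by
        rw [hexp]
        ring
    _ ≤ q * p := by
        rw [sqrt_mul_exp_log_div_two (bornProb_nonneg hψ _),
          sqrt_mul_exp_log_div_two (bornProb_nonneg hψ _)]
        exact mul_le_of_le_one_right (mul_nonneg (bornProb_nonneg hψ _) (bornProb_nonneg hψ _))
          (sqrt_mul_exp_neg_log_div_two_le_one c)

theorem norm_sum_kirkwoodDirac_mul_exp_le_one_of_re_eq_one (hψ : ψ.PosSemidef)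
    (htr : ψ.trace = 1) (hON : ∀ i j, star (f i) ⬝ᵥ f j = if i = j then 1 else 0) {c : ℝ}
    (hc : ∀ m i, Complex.normSq (f m i) ≤ c) {z : ℂ} (hz : z.re = 1) :
    ‖∑ x : n × n, kirkwoodDirac ψ f x.1 x.2 *
      Complex.exp (z * interpolationExponent ψ f c x.1 x.2)‖ ≤ 1 := by
  calc _ ≤ ∑ x : n × n, ‖kirkwoodDirac ψ f x.1 x.2‖ * exp (interpolationExponent ψ f c x.1 x.2) :=
        (norm_sum_le _ _).trans (Finset.sum_le_sum fun x _ => by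
          rw [norm_mul, Complex.norm_exp, Complex.re_mul_ofReal, hz, one_mul])
    _ ≤ ∑ x : n × n, bornProb ψ (f x.1) * bornProb ψ (Pi.single x.2 1) :=
        Finset.sum_le_sum fun x _ => norm_kirkwoodDirac_mul_exp_le hψ hc x.1 x.2
    _ = 1 := by
        simp [Fintype.sum_prod_type, ← Finset.mul_sum, sum_bornProb_single,
          sum_bornProb_eq_re_trace hON, htr]

theorem sum_re_kirkwoodDirac (htr : ψ.trace = 1)
    (hON : ∀ i j, star (f i) ⬝ᵥ f j = if i = j then 1 else 0) :
    ∑ x : n × n, (kirkwoodDirac ψ f x.1 x.2).re = 1 := by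
  simp [Fintype.sum_prod_type, sum_re_kirkwoodDirac_right, sum_bornProb_eq_re_trace hON, htr]

theorem sum_re_kirkwoodDirac_mul_interpolationExponent (htr : ψ.trace = 1)
    (hON : ∀ i j, star (f i) ⬝ᵥ f j = if i = j then 1 else 0) (c : ℝ) :
    ∑ x : n × n, (kirkwoodDirac ψ f x.1 x.2).re * interpolationExponent ψ f c x.1 x.2 =
      (-∑ m, negMulLog (bornProb ψ (f m)) + -∑ i, negMulLog (bornProb ψ (Pi.single i 1))
        - log c) / 2 := by
  have hq : ∑ x : n × n, (kirkwoodDirac ψ f x.1 x.2).re * log (bornProb ψ (f x.1)) =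
      -∑ m, negMulLog (bornProb ψ (f m)) := by
    simp [Fintype.sum_prod_type, ← Finset.sum_mul, sum_re_kirkwoodDirac_right, negMulLog]
  have hp : ∑ x : n × n, (kirkwoodDirac ψ f x.1 x.2).re * log (bornProb ψ (Pi.single x.2 1)) =
      -∑ i, negMulLog (bornProb ψ (Pi.single i 1)) := by
    simp [Fintype.sum_prod_type_right, ← Finset.sum_mul, sum_re_kirkwoodDirac_left hON, negMulLog]
  have hc : ∑ x : n × n, (kirkwoodDirac ψ f x.1 x.2).re * log c = log c := by
    rw [← Finset.sum_mul, sum_re_kirkwoodDirac htr hON, one_mul]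
  rw [← hq, ← hp, ← hc, ← Finset.sum_add_distrib, ← Finset.sum_sub_distrib,
    Finset.sum_div]
  exact Finset.sum_congr rfl fun x _ => by rw [interpolationExponent]; ring

theorem neg_log_le_sum_negMulLog_add_sum_negMulLog (hψ : ψ.PosSemidef) (htr : ψ.trace = 1)
    (hON : ∀ i j, star (f i) ⬝ᵥ f j = if i = j then 1 else 0) {c : ℝ}
    (hc : ∀ m i, Complex.normSq (f m i) ≤ c) :
    -log c ≤ ∑ i, negMulLog (bornProb ψ (Pi.single i 1)) + ∑ m, negMulLog (bornProb ψ (f m)) := by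
  have hderiv := sum_re_mul_nonpos_of_norm_expSum_le_one _ _
    (fun _ hz => norm_sum_kirkwoodDirac_mul_exp_le_one_of_re_eq_zero hψ htr hON c hz)
    (fun _ hz => norm_sum_kirkwoodDirac_mul_exp_le_one_of_re_eq_one hψ htr hON hc hz)
    (sum_re_kirkwoodDirac htr hON)
  rw [sum_re_kirkwoodDirac_mul_interpolationExponent htr hON] at hderiv
  linarith

end Uncertainty

section Entropy

open Real

variable {X : Type*} [Fintype X]

theorem dent_eq_sum_negMulLog_div (q : X → ℝ) : dent q = (∑ x, negMulLog (q x)) / log 2 := by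
  simp only [dent, negMulLog, logb, Finset.sum_div, ← Finset.sum_neg_distrib]
  exact Finset.sum_congr rfl fun _ _ => by ring

/-- The chain rule `H(G, M) = H(G) + H(M | G)` for a uniform bit `G`. -/
theorem dent_half_mul_prod_bool (P : Bool → X → ℝ) (hP : ∀ g, ∑ x, P g x = 1) :
    dent (fun gx : Bool × X => 1 / 2 * P gx.1 gx.2) =
      1 + (dent (P false) + dent (P true)) / 2 := by
  have hhalf : negMulLog (1 / 2) = log 2 / 2 := by simp [negMulLog, log_inv]; ring
  have hsplit : ∀ g, ∑ x, negMulLog (1 / 2 * P g x) =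
      log 2 / 2 + (∑ x, negMulLog (P g x)) / 2 := by
    intro g
    simp only [negMulLog_mul, hhalf, Finset.sum_add_distrib, ← Finset.sum_mul, ← Finset.mul_sum,
      hP]
    ring
  have h2 : log 2 ≠ 0 := (log_pos one_lt_two).ne'
  simp only [dent_eq_sum_negMulLog_div, Fintype.sum_prod_type, Fintype.sum_bool, hsplit]
  field_simp
  ring

theorem dent_uniform [Nonempty X] :
    dent (fun _ : X => 1 / (Fintype.card X : ℝ)) = logb 2 (Fintype.card X) := by
  simp [dent_eq_sum_negMulLog_div, negMulLog, logb]

theorem dent_pi_single [DecidableEq X] (x : X) : dent (Pi.single x 1) = 0 := by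
  simp [dent, Pi.single_apply, apply_ite]

end Entropy

section TwoBasis

open Real

variable {d : ℕ} {f : Fin d → Fin d → ℂ}

theorem bvec_false (f : Fin d → Fin d → ℂ) (m : Fin d) : bvec f false m = Pi.single m 1 := rfl

theorem bvec_true (f : Fin d → Fin d → ℂ) (m : Fin d) : bvec f true m = f m := rfl

theorem outDist_eq (f : Fin d → Fin d → ℂ) (ψ : Matrix (Fin d) (Fin d) ℂ) :
    outDist f ψ = fun gm => 1 / 2 * bornProb ψ (bvec f gm.1 gm.2) := rfl

theorem sum_bornProb_bvec (hON : ∀ i j, star (f i) ⬝ᵥ f j = if i = j then 1 else 0)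
    {ψ : Matrix (Fin d) (Fin d) ℂ} (htr : ψ.trace = 1) (g : Bool) :
    ∑ m, bornProb ψ (bvec f g m) = 1 := by
  cases g
  · simp [bvec_false, sum_bornProb_single, htr]
  · simp [bvec_true, sum_bornProb_eq_re_trace hON, htr]

theorem le_dent_outDist (hON : ∀ i j, star (f i) ⬝ᵥ f j = if i = j then 1 else 0)
    (hMUB : ∀ i j, Complex.normSq (f j i) = 1 / d) {ψ : Matrix (Fin d) (Fin d) ℂ}
    (hψ : ψ.PosSemidef) (htr : ψ.trace = 1) :
    1 + 1 / 2 * logb 2 d ≤ dent (outDist f ψ) := by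
  have hMU := neg_log_le_sum_negMulLog_add_sum_negMulLog hψ htr hON fun m i => (hMUB i m).le
  rw [one_div, log_inv, neg_neg] at hMU
  rw [outDist_eq, dent_half_mul_prod_bool _ (sum_bornProb_bvec hON htr),
    dent_eq_sum_negMulLog_div, dent_eq_sum_negMulLog_div, ← add_div, logb]
  simp only [bvec_false, bvec_true]
  have := div_le_div_of_nonneg_right hMU (log_pos one_lt_two).le
  linarith

theorem dent_outDist_single (hMUB : ∀ i j, Complex.normSq (f j i) = 1 / d) (w : Fin d) :
    dent (outDist f (Matrix.single w w 1)) = 1 + 1 / 2 * logb 2 d := by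
  have : Nonempty (Fin d) := ⟨w⟩
  set P : Bool → Fin d → ℝ := fun g m => bornProb (Matrix.single w w 1) (bvec f g m)
  have hfalse : P false = Pi.single w 1 := by
    ext m
    simp [P, bornProb_single_single, bvec_false, Pi.single_apply, eq_comm]
  have htrue : P true = fun _ => 1 / (Fintype.card (Fin d) : ℝ) := by
    ext m
    simp [P, bornProb_single_single, bvec_true, hMUB]
  have hP : ∀ g, ∑ m, P g m = 1 := by
    rintro (_ | _)
    · simp [hfalse]
    · simp [htrue, (Fin.pos w).ne']
  rw [outDist_eq, dent_half_mul_prod_bool P hP, hfalse, htrue, dent_uniform, dent_pi_single,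
    Fintype.card_fin]
  ring

end TwoBasis

theorem stmt17_general (d : ℕ) (f : Fin d → Fin d → ℂ)
    (hON : ∀ i j, dotProduct (star (f i)) (f j) = if i = j then 1 else 0)
    (hMUB : ∀ i j, Complex.normSq (f j i) = 1 / d) :
    (∀ ψ : Matrix (Fin d) (Fin d) ℂ, ψ.PosSemidef → ψ.trace = 1 →
      1 + (1 / 2) * Real.logb 2 d ≤ dent (outDist f ψ)) ∧
    (∀ w : Fin d,
      dent (outDist f (Matrix.single w w 1)) = 1 + (1 / 2) * Real.logb 2 d) :=
  ⟨fun _ hψ htr => le_dent_outDist hON hMUB hψ htr, dent_outDist_single hMUB⟩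

/-- With `G` uniform on `{0,1}` and `M` the outcome of measuring `ψ` in basis `G`,
for mutually unbiased bases: `H(M,G) ≥ 1 + (1/2) log d`, with equality when `ψ` is a
computational basis state. -/
theorem stmt17 (d : ℕ) (hd : 0 < d) (f : Fin d → Fin d → ℂ)
    (hON : ∀ i j, dotProduct (star (f i)) (f j) = if i = j then 1 else 0)
    (hMUB : ∀ i j, Complex.normSq (f j i) = 1 / d) :
    (∀ ψ : Matrix (Fin d) (Fin d) ℂ, ψ.PosSemidef → ψ.trace = 1 →
      1 + (1 / 2) * Real.logb 2 d ≤ dent (outDist f ψ)) ∧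
    (∀ w : Fin d,
      dent (outDist f (Matrix.single w w 1)) = 1 + (1 / 2) * Real.logb 2 d) :=
  stmt17_general d f hON hMUB
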